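/- The composition of two symmetrel moulds is symmetrel: if M and N satisfy M^{u⧢v} = M^u M^v and N^{u⧢v} = N^u N^v for all words u, v, then M∘N satisfies (M∘N)^{u⧢v} = (M∘N)^u (M∘N)^v. -/

import Mathlib

set_option linter.unusedSectionVars false


/-- The quasi-shuffle product of two words over a commutative semigroup `Ω`. -/
noncomputable def qsh {Ω : Type*} [AddCommSemigroup Ω] :
    List Ω → List Ω → (List Ω →₀ ℤ)
  | [], w => Finsupp.single w 1
  | a :: w', [] => Finsupp.single (a :: w') 1
  | a :: w', b :: w'' =>
      Finsupp.mapDomain (a :: ·) (qsh w' (b :: w''))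
    + Finsupp.mapDomain (b :: ·) (qsh (a :: w') w'')
    + Finsupp.mapDomain ((a + b) :: ·) (qsh w' w'')
  termination_by w₁ w₂ => w₁.length + w₂.length

/-- Weight of a word (junk default value for the empty word). -/
def wt {Ω : Type*} [AddCommSemigroup Ω] [Inhabited Ω] : List Ω → Ω
  | [] => default
  | a :: l => l.foldl (· + ·) a

/-- Iterated quasi-shuffle `w¹ ⧢ ⋯ ⧢ wˢ` of a list of words. -/
noncomputable def qshFold {Ω : Type*} [AddCommSemigroup Ω] :
    List (List Ω) → (List Ω →₀ ℤ)
  | [] => Finsupp.single [] 1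
  | u :: rest => (qshFold rest).sum fun v c => c • qsh u v

/-- The linear extension of a mould `N` to formal `ℤ`-linear combinations of
words. -/
def mext {Ω A : Type*} [CommRing A] (N : List Ω → A) (x : List Ω →₀ ℤ) : A :=
  x.sum fun w c => c • N w

/-- Mould composition
`(M ∘ N)^w = ∑_{s≥1} ∑_{w=w¹.⋯.wˢ} M^{‖w¹‖⋯‖wˢ‖} N^{w¹} ⋯ N^{wˢ}`
(decompositions into nonempty words), with `(M ∘ N)^∅ = M^∅`. -/
noncomputable def mcomp {Ω A : Type*} [AddCommSemigroup Ω] [Inhabited Ω] [CommRing A]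
    (M N : List Ω → A) : List Ω → A := fun w =>
  if w.isEmpty then M [] else
  ∑ c : Composition w.length,
    M ((w.splitWrtComposition c).map wt) * ((w.splitWrtComposition c).map N).prod

section Base
variable {Ω : Type*} [AddCommSemigroup Ω] [Inhabited Ω]

lemma qsh_nil_left (v : List Ω) : qsh [] v = Finsupp.single v 1 := by rw [qsh]

lemma qsh_nil_right (u : List Ω) : qsh u [] = Finsupp.single u 1 := by
  cases u <;> rw [qsh]

lemma qsh_cons_cons (a b : Ω) (u v : List Ω) :
    qsh (a :: u) (b :: v) =
      Finsupp.mapDomain (a :: ·) (qsh u (b :: v))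
    + Finsupp.mapDomain (b :: ·) (qsh (a :: u) v)
    + Finsupp.mapDomain ((a + b) :: ·) (qsh u v) := by rw [qsh]

/-- `bil A x f = ∑ c_w • f w`, the `A`-linear pairing. -/
noncomputable def bil (A : Type*) [CommRing A] {Ω : Type*} {B : Type*}
    [AddCommGroup B] [Module A B] (x : List Ω →₀ ℤ) (f : List Ω → B) : B :=
  x.sum fun w c => (c : A) • f w

variable {A : Type*} [CommRing A] {B B' : Type*} [AddCommGroup B] [Module A B]
  [AddCommGroup B'] [Module A B']

lemma bil_single (w : List Ω) (c : ℤ) (f : List Ω → B) :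
    bil A (Finsupp.single w c) f = (c : A) • f w :=
  Finsupp.sum_single_index (by simp)

lemma bil_add (x y : List Ω →₀ ℤ) (f : List Ω → B) :
    bil A (x + y) f = bil A x f + bil A y f :=
  Finsupp.sum_add_index' (by simp) (by intro w c d; push_cast; rw [add_smul])

lemma bil_mapDomain (g : List Ω → List Ω) (x : List Ω →₀ ℤ) (f : List Ω → B) :
    bil A (Finsupp.mapDomain g x) f = bil A x (fun w => f (g w)) :=
  Finsupp.sum_mapDomain_index (by simp) (by intro w c d; push_cast; rw [add_smul])

lemma bil_congr {x : List Ω →₀ ℤ} {f g : List Ω → B}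
    (h : ∀ w ∈ x.support, f w = g w) : bil A x f = bil A x g :=
  Finsupp.sum_congr fun w hw => by rw [h w hw]

lemma bil_fun_add (x : List Ω →₀ ℤ) (f g : List Ω → B) :
    bil A x (fun w => f w + g w) = bil A x f + bil A x g := by
  simp [bil, smul_add, Finsupp.sum_add]

lemma bil_zero_fun (x : List Ω →₀ ℤ) : bil A x (fun _ => (0 : B)) = 0 := by
  simp [bil]

lemma bil_linear (x : List Ω →₀ ℤ) (f : List Ω → B) (φ : B →ₗ[A] B') :
    φ (bil A x f) = bil A x (fun w => φ (f w)) := by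
  simp [bil, map_finsuppSum, map_smul]

lemma bil_smul_mapDomain (x : List Ω →₀ ℤ) (c : A) (h : List Ω → List Ω)
    (f : List Ω → (List Ω →₀ A)) :
    bil A x (fun w => c • Finsupp.mapDomain h (f w))
      = c • Finsupp.mapDomain h (bil A x f) := by
  have := bil_linear (B := List Ω →₀ A) (B' := List Ω →₀ A) x f
    (c • Finsupp.lmapDomain A A h)
  simpa using this.symm

lemma bil_smul_const (x : List Ω →₀ ℤ) (f : List Ω → A) (C : B) :
    bil A x (fun w => f w • C) = bil A x f • C := by
  simp only [bil, Finsupp.sum, Finset.sum_smul, smul_smul, smul_eq_mul]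

lemma supp3 {x y z : List Ω →₀ ℤ} {g1 g2 g3 : List Ω → List Ω} {w : List Ω}
    (hw : w ∈ (Finsupp.mapDomain g1 x + Finsupp.mapDomain g2 y
      + Finsupp.mapDomain g3 z).support) :
    (∃ w1 ∈ x.support, w = g1 w1) ∨ (∃ w1 ∈ y.support, w = g2 w1)
      ∨ (∃ w1 ∈ z.support, w = g3 w1) := by
  classical
  rcases Finset.mem_union.1 (Finsupp.support_add hw) with h | h
  · rcases Finset.mem_union.1 (Finsupp.support_add h) with h' | h'
    · left
      rcases Finset.mem_image.1 (Finsupp.mapDomain_support h') with ⟨w1, hw1, rfl⟩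
      exact ⟨w1, hw1, rfl⟩
    · right; left
      rcases Finset.mem_image.1 (Finsupp.mapDomain_support h') with ⟨w1, hw1, rfl⟩
      exact ⟨w1, hw1, rfl⟩
  · right; right
    rcases Finset.mem_image.1 (Finsupp.mapDomain_support h) with ⟨w1, hw1, rfl⟩
    exact ⟨w1, hw1, rfl⟩

lemma qsh_support_ne_nil {u : List Ω} (v : List Ω) (hu : u ≠ []) :
    ∀ w ∈ (qsh u v).support, w ≠ [] := by
  intro w hw
  cases u with
  | nil => exact absurd rfl hu
  | cons a u' =>
    cases v with
    | nil =>
      rw [qsh_nil_right] at hw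
      have := Finset.mem_singleton.1 (Finsupp.support_single_subset hw)
      subst this; simp
    | cons b v' =>
      rw [qsh_cons_cons] at hw
      rcases supp3 hw with ⟨w1, _, rfl⟩ | ⟨w1, _, rfl⟩ | ⟨w1, _, rfl⟩ <;> simp

lemma foldl_add_assoc (a : Ω) : ∀ (l : List Ω) (x : Ω),
    l.foldl (· + ·) (a + x) = a + l.foldl (· + ·) x := by
  intro l
  induction l with
  | nil => intro x; rfl
  | cons y l ih => intro x; simpa [add_assoc] using ih (x + y)

lemma wt_cons (a : Ω) {l : List Ω} (h : l ≠ []) : wt (a :: l) = a + wt l := by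
  cases l with
  | nil => exact absurd rfl h
  | cons c l' => simpa [wt] using foldl_add_assoc a l' c

lemma wt_singleton (a : Ω) : wt [a] = a := rfl

lemma mem_single_support {w v : List Ω} (hw : w ∈ (Finsupp.single v (1:ℤ)).support) :
    w = v :=
  Finset.mem_singleton.1 (Finsupp.support_single_subset hw)

lemma wt_qsh : ∀ (n : ℕ) (u v : List Ω), u.length + v.length = n → u ≠ [] → v ≠ [] →
    ∀ w ∈ (qsh u v).support, wt w = wt u + wt v := by
  intro n
  induction n using Nat.strong_induction_on with
  | _ n ih =>
    intro u v hn hu hv w hw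
    cases u with
    | nil => exact absurd rfl hu
    | cons a u' =>
      cases v with
      | nil => exact absurd rfl hv
      | cons b v' =>
        rw [qsh_cons_cons] at hw
        rcases supp3 hw with ⟨w1, hw1, rfl⟩ | ⟨w1, hw1, rfl⟩ | ⟨w1, hw1, rfl⟩
        · cases hu' : u' with
          | nil =>
            subst hu'
            rw [qsh_nil_left] at hw1
            rw [mem_single_support hw1, wt_cons a hv, wt_singleton]
          | cons c u'' =>
            have hne : u' ≠ [] := by simp [hu']
            rw [← hu'] at *
            have h1 : wt w1 = wt u' + wt (b :: v') := by
              refine ih (u'.length + (b :: v').length) (by simp only [List.length_cons] at hn ⊢; omega) u' _ rfl hne (by simp) w1 hw1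
            have hwne : w1 ≠ [] := qsh_support_ne_nil _ hne w1 hw1
            rw [wt_cons a hwne, h1, wt_cons a hne, add_assoc]
        · cases hv' : v' with
          | nil =>
            subst hv'
            rw [qsh_nil_right] at hw1
            rw [mem_single_support hw1, wt_cons b hu, wt_singleton, add_comm]
          | cons c v'' =>
            have hne : v' ≠ [] := by simp [hv']
            rw [← hv'] at *
            have h1 : wt w1 = wt (a :: u') + wt v' := by
              refine ih ((a :: u').length + v'.length) (by simp only [List.length_cons] at hn ⊢; omega) _ v' rfl (by simp) hne w1 hw1
            have hwne : w1 ≠ [] := qsh_support_ne_nil _ (by simp : (a :: u') ≠ []) w1 hw1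
            rw [wt_cons b hwne, h1, wt_cons b hne]
            ac_rfl
        · rcases eq_or_ne u' [] with rfl | hu'
          · rw [qsh_nil_left] at hw1
            rw [mem_single_support hw1]
            rcases eq_or_ne v' [] with rfl | hv'
            · simp [wt_singleton]
            · rw [wt_cons _ hv', wt_singleton, wt_cons b hv', add_assoc]
          · rcases eq_or_ne v' [] with rfl | hv'
            · rw [qsh_nil_right] at hw1
              rw [mem_single_support hw1, wt_cons _ hu', wt_singleton, wt_cons a hu']
              ac_rfl
            · have h1 : wt w1 = wt u' + wt v' := by
                refine ih (u'.length + v'.length) (by simp only [List.length_cons] at hn ⊢; omega) u' v' rfl hu' hv' w1 hw1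
              have hwne : w1 ≠ [] := qsh_support_ne_nil _ hu' w1 hw1
              rw [wt_cons _ hwne, h1, wt_cons a hu', wt_cons b hv']
              ac_rfl

end Base

section QA
variable {Ω : Type*} [AddCommSemigroup Ω] [Inhabited Ω] {A : Type*} [CommRing A]

/-- The quasi-shuffle with coefficients cast into `A`. -/
noncomputable def qshC (A : Type*) [CommRing A] {Ω : Type*} [AddCommSemigroup Ω]
    (u v : List Ω) : List Ω →₀ A :=
  bil A (qsh u v) (fun w => Finsupp.single w 1)

lemma qshC_nil_left (v : List Ω) : qshC A [] v = Finsupp.single v 1 := by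
  simp [qshC, qsh_nil_left, bil_single]

lemma qshC_nil_right (u : List Ω) : qshC A u [] = Finsupp.single u 1 := by
  simp [qshC, qsh_nil_right, bil_single]

lemma bil_single_cons (x : List Ω →₀ ℤ) (g : List Ω → List Ω) :
    bil A x (fun w => Finsupp.single (g w) (1:A))
      = Finsupp.mapDomain g (bil A x (fun w => Finsupp.single w 1)) := by
  have := bil_linear (A := A) x (fun w => Finsupp.single w (1:A)) (Finsupp.lmapDomain A A g)
  simpa [Finsupp.mapDomain_single] using this.symm

lemma qshC_cons_cons (a b : Ω) (u v : List Ω) :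
    qshC A (a :: u) (b :: v) =
      Finsupp.mapDomain (a :: ·) (qshC A u (b :: v))
    + Finsupp.mapDomain (b :: ·) (qshC A (a :: u) v)
    + Finsupp.mapDomain ((a + b) :: ·) (qshC A u v) := by
  simp only [qshC, qsh_cons_cons, bil_add, bil_mapDomain]
  rw [bil_single_cons _ (a :: ·), bil_single_cons _ (b :: ·), bil_single_cons _ ((a + b) :: ·)]

/-- Bilinear extension of the `A`-valued quasi-shuffle to `A`-combinations. -/
noncomputable def qshA (x y : List Ω →₀ A) : List Ω →₀ A :=
  x.sum fun u a => y.sum fun v b => (a * b) • qshC A u v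

lemma qshA_zero_left (y : List Ω →₀ A) : qshA 0 y = 0 :=
  Finsupp.sum_zero_index

lemma qshA_zero_right (x : List Ω →₀ A) : qshA x 0 = 0 := by
  simp [qshA, Finsupp.sum_zero_index]

lemma qshA_add_left (x x' y : List Ω →₀ A) :
    qshA (x + x') y = qshA x y + qshA x' y := by
  unfold qshA
  refine Finsupp.sum_add_index' (by simp) ?_
  intro u a a'
  simp [add_mul, add_smul, Finsupp.sum_add]

lemma qshA_add_right (x y y' : List Ω →₀ A) :
    qshA x (y + y') = qshA x y + qshA x y' := by
  unfold qshA
  rw [← Finsupp.sum_add]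
  refine Finsupp.sum_congr fun u hu => ?_
  refine Finsupp.sum_add_index' (by simp) ?_
  intro v b b'
  simp [mul_add, add_smul]

lemma qshA_smul_left (c : A) (x y : List Ω →₀ A) :
    qshA (c • x) y = c • qshA x y := by
  unfold qshA
  rw [Finsupp.sum_smul_index' (by simp), Finsupp.smul_sum]
  refine Finsupp.sum_congr fun u hu => ?_
  rw [Finsupp.smul_sum]
  refine Finsupp.sum_congr fun v hv => ?_
  rw [smul_eq_mul, mul_assoc, smul_smul]

lemma qshA_smul_right (c : A) (x y : List Ω →₀ A) :
    qshA x (c • y) = c • qshA x y := by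
  unfold qshA
  rw [Finsupp.smul_sum]
  refine Finsupp.sum_congr fun u hu => ?_
  rw [Finsupp.sum_smul_index' (by simp), Finsupp.smul_sum]
  refine Finsupp.sum_congr fun v hv => ?_
  rw [smul_eq_mul, smul_smul, mul_left_comm]

lemma qshA_single_single (u v : List Ω) (a b : A) :
    qshA (Finsupp.single u a) (Finsupp.single v b) = (a * b) • qshC A u v := by
  unfold qshA
  rw [Finsupp.sum_single_index (by simp), Finsupp.sum_single_index (by simp)]

lemma qshA_sum_left {ι : Type*} (s : Finset ι) (f : ι → (List Ω →₀ A))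
    (y : List Ω →₀ A) : qshA (∑ i ∈ s, f i) y = ∑ i ∈ s, qshA (f i) y := by
  classical
  induction s using Finset.cons_induction with
  | empty => simp [qshA_zero_left]
  | cons i s hi ih => rw [Finset.sum_cons, Finset.sum_cons, qshA_add_left, ih]

lemma qshA_sum_right {ι : Type*} (s : Finset ι) (x : List Ω →₀ A)
    (f : ι → (List Ω →₀ A)) : qshA x (∑ i ∈ s, f i) = ∑ i ∈ s, qshA x (f i) := by
  classical
  induction s using Finset.cons_induction with
  | empty => simp [qshA_zero_right]
  | cons i s hi ih => rw [Finset.sum_cons, Finset.sum_cons, qshA_add_right, ih]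

lemma qshA_empty_left (y : List Ω →₀ A) : qshA (Finsupp.single [] 1) y = y := by
  induction y using Finsupp.induction_linear with
  | zero => simp [qshA_zero_right]
  | add y y' hy hy' => rw [qshA_add_right, hy, hy']
  | single v b =>
    rw [qshA_single_single, qshC_nil_left, one_mul, Finsupp.smul_single, smul_eq_mul, mul_one]

lemma qshA_empty_right (x : List Ω →₀ A) : qshA x (Finsupp.single [] 1) = x := by
  induction x using Finsupp.induction_linear with
  | zero => simp [qshA_zero_left]
  | add x x' hx hx' => rw [qshA_add_left, hx, hx']
  | single u a =>
    rw [qshA_single_single, qshC_nil_right, mul_one, Finsupp.smul_single, smul_eq_mul, mul_one]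

lemma qshA_cons (x y : Ω) (X Y : List Ω →₀ A) :
    qshA (Finsupp.mapDomain (x :: ·) X) (Finsupp.mapDomain (y :: ·) Y) =
      Finsupp.mapDomain (x :: ·) (qshA X (Finsupp.mapDomain (y :: ·) Y))
    + Finsupp.mapDomain (y :: ·) (qshA (Finsupp.mapDomain (x :: ·) X) Y)
    + Finsupp.mapDomain ((x + y) :: ·) (qshA X Y) := by
  induction X using Finsupp.induction_linear with
  | zero => simp [qshA_zero_left, qshA_zero_right]
  | add X X' hX hX' =>
    simp only [Finsupp.mapDomain_add, qshA_add_left] at *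
    rw [hX, hX']
    abel
  | single u a =>
    induction Y using Finsupp.induction_linear with
    | zero => simp [qshA_zero_left, qshA_zero_right]
    | add Y Y' hY hY' =>
      simp only [Finsupp.mapDomain_add, qshA_add_right] at *
      rw [hY, hY']
      abel
    | single v b =>
      simp only [Finsupp.mapDomain_single]
      rw [qshA_single_single, qshA_single_single, qshA_single_single, qshA_single_single,
        qshC_cons_cons]
      simp only [smul_add, Finsupp.mapDomain_smul]

end QA

section StarSec
variable {Ω : Type*} [AddCommSemigroup Ω] [Inhabited Ω] {A : Type*} [CommRing A]

lemma sum_rect_split_right {M : Type*} [AddCommMonoid M] (n m : ℕ) (T : ℕ → ℕ → M) :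
    (∑ i ∈ Finset.range (n + 1), ∑ j ∈ Finset.range (m + 1 + 1), T i j)
      = (∑ i ∈ Finset.range (n + 1), T i 0)
        + ∑ i ∈ Finset.range (n + 1), ∑ j ∈ Finset.range (m + 1), T i (j + 1) := by
  rw [Finset.sum_congr rfl fun i _ => (by rw [Finset.sum_range_succ', add_comm] :
    ∑ j ∈ Finset.range (m + 1 + 1), T i j = T i 0 + ∑ j ∈ Finset.range (m + 1), T i (j + 1)),
    Finset.sum_add_distrib]

lemma sum_rect_split_left {M : Type*} [AddCommMonoid M] (n m : ℕ) (T : ℕ → ℕ → M) :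
    (∑ i ∈ Finset.range (n + 1 + 1), ∑ j ∈ Finset.range (m + 1), T i j)
      = (∑ j ∈ Finset.range (m + 1), T 0 j)
        + ∑ i ∈ Finset.range (n + 1), ∑ j ∈ Finset.range (m + 1), T (i + 1) j := by
  rw [Finset.sum_range_succ', add_comm]

lemma sum_square_split {M : Type*} [AddCommMonoid M] (n m : ℕ) (T : ℕ → ℕ → M) :
    (∑ i ∈ Finset.range (n + 1 + 1), ∑ j ∈ Finset.range (m + 1 + 1), T i j)
      = T 0 0 + (∑ i ∈ Finset.range (n + 1), T (i + 1) 0)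
        + (∑ j ∈ Finset.range (m + 1), T 0 (j + 1))
        + ∑ i ∈ Finset.range (n + 1), ∑ j ∈ Finset.range (m + 1), T (i + 1) (j + 1) := by
  rw [sum_rect_split_left n (m + 1), Finset.sum_range_succ', sum_rect_split_right]
  abel

variable {B : Type*} [AddCommGroup B] [Module A B]

lemma qsh_star : ∀ (u v : List Ω) (G : List Ω → List Ω → B),
    bil A (qsh u v)
        (fun w => ∑ i ∈ Finset.range (w.length + 1), G (w.take i) (w.drop i))
      = ∑ i ∈ Finset.range (u.length + 1), ∑ j ∈ Finset.range (v.length + 1),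
          bil A (qsh (u.take i) (v.take j))
            (fun w1 => bil A (qsh (u.drop i) (v.drop j)) (G w1)) := by
  intro u
  induction u with
  | nil =>
    intro v G
    simp [qsh_nil_left, bil_single]
  | cons a u' ihu =>
    intro v
    induction v with
    | nil =>
      intro G
      simp [qsh_nil_right, qsh_nil_left, bil_single]
    | cons b v' ihv =>
      intro G
      have e1 : bil A (qsh u' (b :: v'))
            (fun w => ∑ i ∈ Finset.range (w.length + 1), G (a :: w.take i) (w.drop i))
          = ∑ i ∈ Finset.range (u'.length + 1),
              ∑ j ∈ Finset.range ((b :: v').length + 1),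
              bil A (qsh (u'.take i) ((b :: v').take j))
                (fun w1 => bil A (qsh (u'.drop i) ((b :: v').drop j)) (G (a :: w1))) :=
        ihu (b :: v') (fun p => G (a :: p))
      have e2 : bil A (qsh (a :: u') v')
            (fun w => ∑ i ∈ Finset.range (w.length + 1), G (b :: w.take i) (w.drop i))
          = ∑ i ∈ Finset.range ((a :: u').length + 1),
              ∑ j ∈ Finset.range (v'.length + 1),
              bil A (qsh ((a :: u').take i) (v'.take j))
                (fun w1 => bil A (qsh ((a :: u').drop i) (v'.drop j)) (G (b :: w1))) :=
        ihv (fun p => G (b :: p))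
      have e3 : bil A (qsh u' v')
            (fun w => ∑ i ∈ Finset.range (w.length + 1), G ((a + b) :: w.take i) (w.drop i))
          = ∑ i ∈ Finset.range (u'.length + 1),
              ∑ j ∈ Finset.range (v'.length + 1),
              bil A (qsh (u'.take i) (v'.take j))
                (fun w1 => bil A (qsh (u'.drop i) (v'.drop j)) (G ((a + b) :: w1))) :=
        ihu v' (fun p => G ((a + b) :: p))
      have hb : ∀ (x : Ω) (X : List Ω →₀ ℤ),
          bil A X (fun w => ∑ i ∈ Finset.range ((x :: w).length + 1),
              G ((x :: w).take i) ((x :: w).drop i))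
            = bil A X (fun w => ∑ i ∈ Finset.range (w.length + 1),
                G (x :: w.take i) (w.drop i))
              + bil A X (fun w => G [] (x :: w)) := by
        intro x X
        rw [← bil_fun_add]
        refine bil_congr fun w _ => ?_
        rw [List.length_cons, Finset.sum_range_succ']
        simp
      conv_lhs => rw [qsh_cons_cons]
      simp only [bil_add, bil_mapDomain]
      rw [hb, hb, hb, e1, e2, e3]
      simp only [List.length_cons]
      rw [sum_square_split u'.length v'.length,
        sum_rect_split_right u'.length v'.length,
        sum_rect_split_left u'.length v'.length]
      simp only [List.take_succ_cons, List.drop_succ_cons, List.take_zero, List.drop_zero,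
        qsh_nil_left, qsh_nil_right, qsh_cons_cons, bil_add, bil_mapDomain, bil_single,
        Int.cast_one, one_smul, Finset.sum_add_distrib]
      abel

end StarSec

section ThetaSec
variable {Ω : Type*} [AddCommSemigroup Ω] [Inhabited Ω] {A : Type*} [CommRing A]

/-- `theta N w = ∑ over compositions of w, (∏ N blocks) • [weights of blocks]`,
defined by a first-block recursion. -/
noncomputable def theta (N : List Ω → A) : List Ω → (List Ω →₀ A)
  | [] => Finsupp.single [] 1
  | a :: w => ∑ i ∈ Finset.range (w.length + 1),
      N (a :: w.take i) •
        Finsupp.mapDomain (wt (a :: w.take i) :: ·) (theta N (w.drop i))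
  termination_by w => w.length
  decreasing_by simpa using Nat.lt_succ_of_le (Nat.sub_le _ _)

lemma theta_nil (N : List Ω → A) : theta N [] = Finsupp.single [] 1 := by rw [theta]

lemma theta_cons (N : List Ω → A) (a : Ω) (w : List Ω) :
    theta N (a :: w) = ∑ i ∈ Finset.range (w.length + 1),
      N (a :: w.take i) •
        Finsupp.mapDomain (wt (a :: w.take i) :: ·) (theta N (w.drop i)) := by rw [theta]

/-- The summand in the deconcatenation formula for `theta`. -/
noncomputable def thG (N : List Ω → A) : List Ω → List Ω → (List Ω →₀ A)
  | [], _ => 0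
  | w1@(_ :: _), w2 => N w1 • Finsupp.mapDomain (wt w1 :: ·) (theta N w2)

lemma thG_nil_fun (N : List Ω → A) : thG N [] = fun _ => 0 := funext fun _ => rfl

lemma thG_cons_fun (N : List Ω → A) (c : Ω) (p : List Ω) :
    thG N (c :: p) = fun w2 => N (c :: p) •
      Finsupp.mapDomain (wt (c :: p) :: ·) (theta N w2) := funext fun _ => rfl

lemma theta_eq_decon (N : List Ω → A) (c : Ω) (w : List Ω) :
    theta N (c :: w) = ∑ i ∈ Finset.range ((c :: w).length + 1),
      thG N ((c :: w).take i) ((c :: w).drop i) := by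
  rw [List.length_cons, Finset.sum_range_succ', theta_cons]
  simp [thG]

lemma bil_thG_cons (N : List Ω → A) (c : Ω) (p : List Ω) (X : List Ω →₀ ℤ) :
    bil A X (thG N (c :: p))
      = N (c :: p) • Finsupp.mapDomain (wt (c :: p) :: ·) (bil A X (theta N)) := by
  rw [thG_cons_fun, bil_smul_mapDomain]

lemma bil_eq_mext (P : List Ω → A) (x : List Ω →₀ ℤ) : bil A x P = mext P x :=
  Finsupp.sum_congr fun w _ => Int.cast_smul_eq_zsmul A _ _

lemma mapDomain_finsetSum {ι : Type*} (g : List Ω → List Ω) (s : Finset ι)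
    (f : ι → (List Ω →₀ A)) :
    Finsupp.mapDomain g (∑ i ∈ s, f i) = ∑ i ∈ s, Finsupp.mapDomain g (f i) :=
  map_sum (Finsupp.mapDomain.addMonoidHom g) f s

lemma ML (N : List Ω → A) (hN : ∀ u v : List Ω, mext N (qsh u v) = N u * N v) :
    ∀ (n : ℕ) (u v : List Ω), u.length + v.length = n →
      bil A (qsh u v) (theta N) = qshA (theta N u) (theta N v) := by
  intro n
  induction n using Nat.strong_induction_on with
  | _ n ih =>
    intro u v hn
    match u, v with
    | [], v =>
      rw [qsh_nil_left, bil_single, Int.cast_one, one_smul, theta_nil, qshA_empty_left]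
    | (a :: u'), [] =>
      rw [qsh_nil_right, bil_single, Int.cast_one, one_smul, theta_nil, qshA_empty_right]
    | (a :: u'), (b :: v') =>
      have hIH : ∀ (u₂ v₂ : List Ω), u₂.length + v₂.length < n →
          bil A (qsh u₂ v₂) (theta N) = qshA (theta N u₂) (theta N v₂) :=
        fun u₂ v₂ h => ih _ h u₂ v₂ rfl
      have stepA : bil A (qsh (a :: u') (b :: v')) (theta N)
          = bil A (qsh (a :: u') (b :: v'))
              (fun w => ∑ i ∈ Finset.range (w.length + 1), thG N (w.take i) (w.drop i)) :=
        bil_congr fun w hw => by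
          obtain ⟨c, w'', rfl⟩ :=
            List.exists_cons_of_ne_nil (qsh_support_ne_nil _ (by simp) w hw)
          exact theta_eq_decon N c w''
      rw [stepA, qsh_star]
      simp only [List.length_cons]
      rw [sum_square_split u'.length v'.length]
      simp only [List.take_succ_cons, List.drop_succ_cons, List.take_zero, List.drop_zero]
      have G00 : bil A (qsh ([] : List Ω) [])
            (fun w1 => bil A (qsh (a :: u') (b :: v')) (thG N w1)) = 0 := by
        simp only [qsh_nil_left, bil_single, Int.cast_one, one_smul]
        rw [thG_nil_fun]
        exact bil_zero_fun _
      have G2 : ∀ i ∈ Finset.range (u'.length + 1),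
          bil A (qsh (a :: u'.take i) [])
              (fun w1 => bil A (qsh (u'.drop i) (b :: v')) (thG N w1))
            = N (a :: u'.take i) • Finsupp.mapDomain (wt (a :: u'.take i) :: ·)
                (qshA (theta N (u'.drop i)) (theta N (b :: v'))) := by
        intro i _
        rw [qsh_nil_right]
        simp only [bil_single, Int.cast_one, one_smul]
        rw [bil_thG_cons, hIH _ _ (by simp only [List.length_cons, List.length_drop] at hn ⊢; omega)]
      have G3 : ∀ j ∈ Finset.range (v'.length + 1),
          bil A (qsh ([] : List Ω) (b :: v'.take j))
              (fun w1 => bil A (qsh (a :: u') (v'.drop j)) (thG N w1))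
            = N (b :: v'.take j) • Finsupp.mapDomain (wt (b :: v'.take j) :: ·)
                (qshA (theta N (a :: u')) (theta N (v'.drop j))) := by
        intro j _
        rw [qsh_nil_left]
        simp only [bil_single, Int.cast_one, one_smul]
        rw [bil_thG_cons, hIH _ _ (by simp only [List.length_cons, List.length_drop] at hn ⊢; omega)]
      have G4 : ∀ i ∈ Finset.range (u'.length + 1), ∀ j ∈ Finset.range (v'.length + 1),
          bil A (qsh (a :: u'.take i) (b :: v'.take j))
              (fun w1 => bil A (qsh (u'.drop i) (v'.drop j)) (thG N w1))
            = (N (a :: u'.take i) * N (b :: v'.take j)) •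
                Finsupp.mapDomain ((wt (a :: u'.take i) + wt (b :: v'.take j)) :: ·)
                  (qshA (theta N (u'.drop i)) (theta N (v'.drop j))) := by
        intro i _ j _
        have hw : ∀ w1 ∈ (qsh (a :: u'.take i) (b :: v'.take j)).support,
            bil A (qsh (u'.drop i) (v'.drop j)) (thG N w1)
              = (fun w1 => N w1 • Finsupp.mapDomain
                  ((wt (a :: u'.take i) + wt (b :: v'.take j)) :: ·)
                  (bil A (qsh (u'.drop i) (v'.drop j)) (theta N))) w1 := by
          intro w1 hw1
          obtain ⟨c, p, rfl⟩ :=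
            List.exists_cons_of_ne_nil (qsh_support_ne_nil _ (by simp) w1 hw1)
          have hwt : wt (c :: p) = wt (a :: u'.take i) + wt (b :: v'.take j) :=
            wt_qsh _ _ _ rfl (by simp) (by simp) _ hw1
          dsimp only
          rw [bil_thG_cons, hwt]
        rw [bil_congr hw, bil_smul_const, bil_eq_mext, hN,
          hIH _ _ (by simp only [List.length_cons, List.length_drop] at hn ⊢; omega)]
      rw [G00, Finset.sum_congr rfl G2, Finset.sum_congr rfl G3,
        Finset.sum_congr rfl (fun i hi => Finset.sum_congr rfl (G4 i hi)), zero_add]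
      -- Now compute the right-hand side `qshA (theta u) (theta v)`.
      have hvX : ∀ X : List Ω →₀ A, qshA X (theta N (b :: v'))
          = ∑ j ∈ Finset.range (v'.length + 1), N (b :: v'.take j) •
              qshA X (Finsupp.mapDomain (wt (b :: v'.take j) :: ·) (theta N (v'.drop j))) := by
        intro X
        rw [theta_cons, qshA_sum_right]
        exact Finset.sum_congr rfl fun j _ => qshA_smul_right _ _ _
      have huY : ∀ Y : List Ω →₀ A, qshA (theta N (a :: u')) Y
          = ∑ i ∈ Finset.range (u'.length + 1), N (a :: u'.take i) •
              qshA (Finsupp.mapDomain (wt (a :: u'.take i) :: ·) (theta N (u'.drop i))) Y := by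
        intro Y
        rw [theta_cons, qshA_sum_left]
        exact Finset.sum_congr rfl fun i _ => qshA_smul_left _ _ _
      rw [huY (theta N (b :: v'))]
      have key_i : ∀ i ∈ Finset.range (u'.length + 1),
          N (a :: u'.take i) • qshA
              (Finsupp.mapDomain (wt (a :: u'.take i) :: ·) (theta N (u'.drop i)))
              (theta N (b :: v'))
          = N (a :: u'.take i) • Finsupp.mapDomain (wt (a :: u'.take i) :: ·)
              (qshA (theta N (u'.drop i)) (theta N (b :: v')))
            + (∑ j ∈ Finset.range (v'.length + 1),
                (N (a :: u'.take i) * N (b :: v'.take j)) •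
                  Finsupp.mapDomain (wt (b :: v'.take j) :: ·)
                    (qshA (Finsupp.mapDomain (wt (a :: u'.take i) :: ·) (theta N (u'.drop i)))
                      (theta N (v'.drop j))))
            + (∑ j ∈ Finset.range (v'.length + 1),
                (N (a :: u'.take i) * N (b :: v'.take j)) •
                  Finsupp.mapDomain ((wt (a :: u'.take i) + wt (b :: v'.take j)) :: ·)
                    (qshA (theta N (u'.drop i)) (theta N (v'.drop j)))) := by
        intro i _
        rw [hvX]
        rw [Finset.sum_congr rfl (fun j _ => congrArg (N (b :: v'.take j) • ·)
          (qshA_cons (wt (a :: u'.take i)) (wt (b :: v'.take j)) _ _))]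
        simp only [smul_add, Finset.smul_sum, Finset.sum_add_distrib, smul_smul]
        have h1 : (∑ j ∈ Finset.range (v'.length + 1),
              (N (a :: u'.take i) * N (b :: v'.take j)) •
                Finsupp.mapDomain (wt (a :: u'.take i) :: ·)
                  (qshA (theta N (u'.drop i))
                    (Finsupp.mapDomain (wt (b :: v'.take j) :: ·) (theta N (v'.drop j)))))
            = N (a :: u'.take i) • Finsupp.mapDomain (wt (a :: u'.take i) :: ·)
                (qshA (theta N (u'.drop i)) (theta N (b :: v'))) := by
          rw [hvX (theta N (u'.drop i)), mapDomain_finsetSum, Finset.smul_sum]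
          exact Finset.sum_congr rfl fun j _ => by
            rw [Finsupp.mapDomain_smul, smul_smul]
        rw [h1]
      have hmid : (∑ j ∈ Finset.range (v'.length + 1), N (b :: v'.take j) •
            Finsupp.mapDomain (wt (b :: v'.take j) :: ·)
              (qshA (theta N (a :: u')) (theta N (v'.drop j))))
          = ∑ i ∈ Finset.range (u'.length + 1), ∑ j ∈ Finset.range (v'.length + 1),
              (N (a :: u'.take i) * N (b :: v'.take j)) •
                Finsupp.mapDomain (wt (b :: v'.take j) :: ·)
                  (qshA (Finsupp.mapDomain (wt (a :: u'.take i) :: ·) (theta N (u'.drop i)))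
                    (theta N (v'.drop j))) := by
        rw [Finset.sum_comm]
        refine Finset.sum_congr rfl fun j _ => ?_
        rw [huY (theta N (v'.drop j)), mapDomain_finsetSum, Finset.smul_sum]
        refine Finset.sum_congr rfl fun i _ => ?_
        rw [Finsupp.mapDomain_smul, smul_smul, mul_comm (N (b :: List.take j v'))]
      rw [Finset.sum_congr rfl key_i]
      simp only [Finset.sum_add_distrib]
      rw [hmid]

end ThetaSec

section Bridge
variable {Ω : Type*} [AddCommSemigroup Ω] [Inhabited Ω] {A : Type*} [CommRing A]

lemma comp_sum_succ {M : Type*} [AddCommMonoid M] {α : Type*} (a : α) (w : List α)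
    (F : List (List α) → M) :
    (∑ c : Composition (a :: w).length, F ((a :: w).splitWrtComposition c))
    = ∑ i ∈ Finset.range (w.length + 1), ∑ c : Composition ((w.drop i).length),
        F ((a :: w.take i) :: (w.drop i).splitWrtComposition c) := by
  classical
  let e : (Σ i : Fin (w.length + 1), Composition ((w.drop i).length)) →
      Composition ((a :: w).length) := fun x =>
    ⟨(x.1.1 + 1) :: x.2.blocks, by
      intro n hn
      rcases List.mem_cons.1 hn with rfl | h
      · omega
      · exact x.2.blocks_pos h, by
      have h1 := x.2.blocks_sum
      have h2 := x.1.isLt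
      simp only [List.sum_cons, List.length_drop, List.length_cons] at h1 ⊢
      omega⟩
  have he : Function.Bijective e := by
    constructor
    · rintro ⟨i, c⟩ ⟨i', c'⟩ h
      have hb : (i.1 + 1) :: c.blocks = (i'.1 + 1) :: c'.blocks :=
        congrArg Composition.blocks h
      have hi : i = i' := Fin.ext (by injection hb with h1 _; omega)
      subst hi
      have hc : c = c' := Composition.ext (by injection hb)
      rw [hc]
    · intro c
      rcases hb : c.blocks with _ | ⟨m, rest⟩
      · exfalso
        have h2 := c.blocks_sum
        rw [hb] at h2
        simp at h2
      · have hm : 0 < m := c.blocks_pos (by rw [hb]; exact List.mem_cons_self)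
        have hsum : m + rest.sum = w.length + 1 := by
          have := c.blocks_sum
          rw [hb] at this
          simpa using this
        refine ⟨⟨⟨m - 1, by omega⟩, ⟨rest, ?_, ?_⟩⟩, ?_⟩
        · intro n hn
          exact c.blocks_pos (by rw [hb]; exact List.mem_cons_of_mem _ hn)
        · simp only [List.length_drop]
          omega
        · refine Composition.ext ?_
          show (m - 1 + 1) :: rest = c.blocks
          rw [hb]
          congr 1
          omega
  rw [← Fintype.sum_bijective e he _ _ (fun x => rfl), ← Finset.univ_sigma_univ,
    Finset.sum_sigma, ← Fin.sum_univ_eq_sum_range]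
  refine Finset.sum_congr rfl fun i _ => Finset.sum_congr rfl fun c _ => ?_
  congr 1
  show List.splitWrtCompositionAux (a :: w) ((i.1 + 1) :: c.blocks) = _
  rw [List.splitWrtCompositionAux_cons]
  simp [List.splitWrtComposition]

lemma theta_eq (N : List Ω → A) : ∀ (n : ℕ) (w : List Ω), w.length = n →
    theta N w = ∑ c : Composition w.length,
      ((w.splitWrtComposition c).map N).prod •
        Finsupp.single ((w.splitWrtComposition c).map wt) (1 : A) := by
  intro n
  induction n using Nat.strong_induction_on with
  | _ n ih =>
    intro w hw
    cases w with
    | nil =>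
      rw [theta_nil]
      have hb : ∀ c : Composition (([] : List Ω)).length, c.blocks = [] := by
        intro c
        rcases hbc : c.blocks with _ | ⟨m, r⟩
        · rfl
        · exfalso
          have h1 := c.blocks_pos (by rw [hbc]; exact List.mem_cons_self)
          have h2 := c.blocks_sum
          rw [hbc] at h2
          simp at h2
          omega
      have : Subsingleton (Composition (([] : List Ω)).length) :=
        ⟨fun c d => Composition.ext (by rw [hb c, hb d])⟩
      rw [Fintype.sum_subsingleton _ (default : Composition (([] : List Ω)).length)]
      rw [show (([] : List Ω).splitWrtComposition
          (default : Composition (([] : List Ω)).length)) = [] by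
        rw [List.splitWrtComposition, hb]; rfl]
      simp
    | cons a w' =>
      rw [theta_cons,
        comp_sum_succ a w' (fun L => ((L.map N).prod • Finsupp.single (L.map wt) (1 : A)))]
      refine Finset.sum_congr rfl fun i hi => ?_
      rw [ih (w'.drop i).length
        (by simp only [List.length_drop, List.length_cons] at hw ⊢; omega) (w'.drop i) rfl]
      rw [mapDomain_finsetSum, Finset.smul_sum]
      refine Finset.sum_congr rfl fun c _ => ?_
      rw [Finsupp.mapDomain_smul, Finsupp.mapDomain_single, smul_smul]
      simp [List.map_cons, List.prod_cons, mul_comm]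

end Bridge

section Final
variable {Ω : Type*} [AddCommSemigroup Ω] [Inhabited Ω] {A : Type*} [CommRing A]

lemma mcomp_eq_lc (M N : List Ω → A) (w : List Ω) :
    mcomp M N w = Finsupp.linearCombination A M (theta N w) := by
  cases w with
  | nil => simp [mcomp, theta_nil]
  | cons a w' =>
    rw [theta_eq N (a :: w').length (a :: w') rfl]
    simp only [mcomp, List.isEmpty_cons, if_neg Bool.false_ne_true]
    rw [map_sum]
    refine Finset.sum_congr rfl fun c _ => ?_
    rw [map_smul, Finsupp.linearCombination_single, one_smul, smul_eq_mul, mul_comm]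

lemma lc_qshA (M : List Ω → A) (hM : ∀ u v : List Ω, mext M (qsh u v) = M u * M v)
    (x y : List Ω →₀ A) :
    Finsupp.linearCombination A M (qshA x y)
      = Finsupp.linearCombination A M x * Finsupp.linearCombination A M y := by
  induction x using Finsupp.induction_linear with
  | zero => simp [qshA_zero_left]
  | add x x' hx hx' => rw [qshA_add_left, map_add, hx, hx', map_add, add_mul]
  | single u a =>
    induction y using Finsupp.induction_linear with
    | zero => simp [qshA_zero_right]
    | add y y' hy hy' => rw [qshA_add_right, map_add, hy, hy', map_add, mul_add]
    | single v b =>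
      have hq : Finsupp.linearCombination A M (qshC A u v) = M u * M v := by
        rw [show qshC A u v = bil A (qsh u v) (fun w => Finsupp.single w (1 : A)) from rfl,
          bil_linear (A := A) (qsh u v) _ (Finsupp.linearCombination A M)]
        have : bil A (qsh u v)
            (fun w => Finsupp.linearCombination A M (Finsupp.single w (1 : A)))
            = bil A (qsh u v) M :=
          bil_congr fun w _ => by rw [Finsupp.linearCombination_single, one_smul]
        rw [this, bil_eq_mext, hM]
      rw [qshA_single_single, map_smul, hq, Finsupp.linearCombination_single,
        Finsupp.linearCombination_single, smul_eq_mul, smul_eq_mul, smul_eq_mul]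
      ring

end Final

/-- the composition of two symmetrel moulds is symmetrel. -/
theorem mcomp_symmetrel {Ω A : Type*} [AddCommSemigroup Ω] [Inhabited Ω]
    [CommRing A] (M N : List Ω → A)
    (hM : ∀ u v : List Ω, mext M (qsh u v) = M u * M v)
    (hN : ∀ u v : List Ω, mext N (qsh u v) = N u * N v) :
    ∀ u v : List Ω,
      mext (mcomp M N) (qsh u v) = mcomp M N u * mcomp M N v := by
  intro u v
  rw [← bil_eq_mext]
  have h2 : bil A (qsh u v) (mcomp M N)
      = bil A (qsh u v) (fun w => Finsupp.linearCombination A M (theta N w)) :=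
    bil_congr fun w _ => mcomp_eq_lc M N w
  rw [h2, ← bil_linear, ML N hN (u.length + v.length) u v rfl, lc_qshA M hM,
    ← mcomp_eq_lc, ← mcomp_eq_lc]
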